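/- arXiv:2106.05944 — 8 statements merged into one kernel-verified Lean document; each statement's English description precedes it below -/
import Mathlib

section
/- Let D be an n×n dissimilarity matrix. Then D is circular Robinson if and only if for every i ∈ [n] and every r > 0 the closed ball B_r(i) = {j ∈ [n] : D(i,j) ≤ r} is an arc of [n]. -/
/-- The standard cyclic order on `Fin n`. -/
def CycOrd {n : ℕ} (i j k : Fin n) : Prop :=
  (i < j ∧ j < k) ∨ (j < k ∧ k < i) ∨ (k < i ∧ i < j)

/-- `i,j,k,l` are pairwise distinct and cyclically ordered. -/
def CycOrd4 {n : ℕ} (i j k l : Fin n) : Prop :=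
  i ≠ j ∧ i ≠ k ∧ i ≠ l ∧ j ≠ k ∧ j ≠ l ∧ k ≠ l ∧ CycOrd i j k ∧ CycOrd i k l

/-- `D` is a dissimilarity matrix. -/
def IsDissim {n : ℕ} (D : Fin n → Fin n → ℝ) : Prop :=
  (∀ i j, D i j = D j i) ∧ (∀ i j, 0 ≤ D i j) ∧ (∀ i, D i i = 0)

/-- `D` is a circular Robinson matrix. -/
def CircRobinson {n : ℕ} (D : Fin n → Fin n → ℝ) : Prop :=
  ∀ i j k l : Fin n, CycOrd4 i j k l → min (D j k) (D k l) ≤ D i k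

open Fin.NatCast in
/-- The arc `{a, a+1, …, a+k}` (mod `n`) of `Fin n`. -/
def arcSet (n : ℕ) [NeZero n] (a : Fin n) (k : ℕ) : Set (Fin n) :=
  {x | ∃ t : ℕ, t ≤ k ∧ x = a + (t : Fin n)}

/-- `A` is an arc of `Fin n`. -/
def IsArc (n : ℕ) [NeZero n] (A : Set (Fin n)) : Prop :=
  A.Nonempty ∧ ∃ (a : Fin n) (k : ℕ), k ≤ n - 1 ∧ A = arcSet n a k

/-! Both directions are read off in coordinates relative to a base point `a`, that is through
`x ↦ (x - a).val`: this turns the cyclic order into the order of `ℕ` and the arc starting at `a`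
into an initial segment. If all balls are arcs and `D i k < min (D j k) (D k l)`, some ball around
`k` contains `i` and `k` but neither `j` nor `l`, which no arc does when `i, j, k, l` are
cyclically ordered. Conversely, relative to a centre `i`, the Robinson inequality at `k = i` says
that if `0 < y < p < x` and `y`, `x` lie outside a ball around `i`, then so does `p`; and a set
containing `0` whose complement is order-convex is an arc. -/

namespace Fin

variable {n : ℕ}

theorem val_sub_eq_ite (a b : Fin n) :
    (a - b).val = if b ≤ a then a.val - b.val else n + a.val - b.val := by
  split_ifs with h
  · exact sub_val_of_le h
  · exact coe_sub_iff_lt.mpr (not_le.mp h)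

end Fin

section CyclicOrder

variable {n : ℕ}

theorem cycOrd_iff_val_sub (i j k : Fin n) :
    CycOrd i j k ↔ 0 < (j - i).val ∧ (j - i).val < (k - i).val := by
  simp only [CycOrd, Fin.lt_def, Fin.val_sub_eq_ite, Fin.le_def]
  split_ifs <;> omega

variable [NeZero n]

theorem cycOrd_sub_right_iff (a i j k : Fin n) :
    CycOrd (i - a) (j - a) (k - a) ↔ CycOrd i j k := by
  simp only [cycOrd_iff_val_sub, sub_sub_sub_cancel_right]

theorem cycOrd4_sub_right_iff (a i j k l : Fin n) :
    CycOrd4 (i - a) (j - a) (k - a) (l - a) ↔ CycOrd4 i j k l := by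
  simp only [CycOrd4, ne_eq, sub_left_inj, cycOrd_sub_right_iff]

end CyclicOrder

section Arcs

variable {n : ℕ} [NeZero n]

open Fin.NatCast in
theorem mem_arcSet_iff {a x : Fin n} {K : ℕ} : x ∈ arcSet n a K ↔ (x - a).val ≤ K := by
  constructor
  · rintro ⟨t, ht, rfl⟩
    rw [add_sub_cancel_left, Fin.val_natCast]
    exact (Nat.mod_le t n).trans ht
  · exact fun h => ⟨(x - a).val, h, by rw [Fin.cast_val_eq_self, add_sub_cancel]⟩

theorem CycOrd4.mem_arcSet_or_mem_arcSet {i j k l a : Fin n} {K : ℕ} (h : CycOrd4 i j k l)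
    (hi : i ∈ arcSet n a K) (hk : k ∈ arcSet n a K) :
    j ∈ arcSet n a K ∨ l ∈ arcSet n a K := by
  rw [← cycOrd4_sub_right_iff a] at h
  simp only [CycOrd4, CycOrd, ne_eq, Fin.ext_iff, Fin.lt_def] at h
  simp only [mem_arcSet_iff] at hi hk ⊢
  omega

theorem IsArc.preimage_sub {B : Set (Fin n)} (hB : IsArc n B) (c : Fin n) :
    IsArc n ((· - c) ⁻¹' B) := by
  obtain ⟨⟨x, hx⟩, a, K, hK, rfl⟩ := hB
  refine ⟨⟨x + c, by simpa using hx⟩, c + a, K, hK, ?_⟩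
  ext y
  simp only [Set.mem_preimage, mem_arcSet_iff, sub_sub]

theorem isArc_of_zero_mem_of_ordConnected_compl {B : Set (Fin n)} (h0 : 0 ∈ B)
    (hB : Bᶜ.OrdConnected) : IsArc n B := by
  refine ⟨⟨0, h0⟩, ?_⟩
  rcases Bᶜ.eq_empty_or_nonempty with hempty | hne
  · refine ⟨0, n - 1, le_rfl, ?_⟩
    ext x
    simp only [Set.compl_empty_iff.mp hempty, Set.mem_univ, mem_arcSet_iff, sub_zero, true_iff]
    omega
  obtain ⟨u, hu, humin⟩ := Set.exists_min_image _ id Bᶜ.toFinite hne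
  obtain ⟨v, hv, hvmax⟩ := Set.exists_max_image _ id Bᶜ.toFinite hne
  have hmem (x : Fin n) : x ∈ B ↔ x < u ∨ v < x := by
    constructor
    · intro hx
      by_contra! h
      exact hB.out hu hv h hx
    · rintro (h | h)
      · exact not_not.mp fun hx => (humin x hx).not_gt h
      · exact not_not.mp fun hx => (hvmax x hx).not_gt h
  have hu0 : 0 < u.val := Fin.pos_iff_ne_zero.mpr (by rintro rfl; exact hu h0)
  have huv : u ≤ v := humin v hv
  obtain ⟨m, rfl⟩ := Nat.exists_eq_add_one.mpr (NeZero.pos n)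
  -- `B` runs from `v + 1` (wrapping around when `v` is the last element) through `0` to `u - 1`.
  refine ⟨v + 1, u.val + m - 1 - v.val, by omega, ?_⟩
  ext x
  have hv1 := Fin.val_add_one v
  simp only [Fin.ext_iff, Fin.val_last] at hv1
  rw [hmem, mem_arcSet_iff, Fin.val_sub_eq_ite]
  simp only [Fin.lt_def, Fin.le_def]
  generalize v + 1 = w at hv1 ⊢
  split_ifs at hv1 ⊢ <;> omega

end Arcs

section Robinson

variable {n : ℕ} [NeZero n] {D : Fin n → Fin n → ℝ}

theorem CircRobinson.isArc_ball (hR : CircRobinson D) (hD : IsDissim D) (i : Fin n) {r : ℝ}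
    (hr : 0 ≤ r) : IsArc n {j | D i j ≤ r} := by
  set B : Set (Fin n) := {t | D i (i + t) ≤ r}
  have hball : {j | D i j ≤ r} = (· - i) ⁻¹' B := by
    ext j
    simp only [B, Set.mem_ofPred_eq, Set.mem_preimage, add_sub_cancel]
  have h0 : 0 ∈ B := by simpa only [B, Set.mem_ofPred_eq, add_zero, hD.2.2] using hr
  rw [hball]
  refine IsArc.preimage_sub
    (isArc_of_zero_mem_of_ordConnected_compl h0 ⟨fun y hy x hx p ⟨hyp, hpx⟩ hp => ?_⟩) i
  rcases hyp.eq_or_lt with rfl | hyp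
  · exact hy hp
  rcases hpx.eq_or_lt with rfl | hpx
  · exact hx hp
  have hy0 : y ≠ 0 := by rintro rfl; exact hy h0
  have hcyc : CycOrd4 (i + p) (i + x) i (i + y) := by
    rw [← cycOrd4_sub_right_iff i]
    simp only [CycOrd4, CycOrd, add_sub_cancel_left, sub_self, ne_eq, Fin.ext_iff,
      Fin.lt_def, Fin.val_zero] at hyp hpx hy0 ⊢
    omega
  simp only [B, Set.mem_compl_iff, Set.mem_ofPred_eq, not_le] at hx hy hp
  have hmin := hR _ _ _ _ hcyc
  rw [hD.1 (i + x), hD.1 (i + p)] at hmin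
  exact (lt_min hx hy).not_ge (hmin.trans hp)

theorem circRobinson_of_isArc_ball (hD : IsDissim D)
    (hball : ∀ (i : Fin n) (r : ℝ), 0 < r → IsArc n {j | D i j ≤ r}) : CircRobinson D := by
  intro i j k l hc
  by_contra! hlt
  obtain ⟨r, hik, hr⟩ := exists_between hlt
  obtain ⟨-, a, K, -, hB⟩ := hball k r (lt_of_le_of_lt (hD.2.1 i k) hik)
  have hmem (x : Fin n) : x ∈ arcSet n a K ↔ D x k ≤ r := by
    rw [← hB, Set.mem_ofPred_eq, hD.1]
  have hkk : D k k ≤ r := (hD.2.2 k).trans_le (hD.2.1 i k |>.trans hik.le)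
  rcases hc.mem_arcSet_or_mem_arcSet ((hmem i).2 hik.le) ((hmem k).2 hkk) with hj | hl
  · exact ((hmem j).1 hj).not_gt (hr.trans_le (min_le_left _ _))
  · exact ((hmem l).1 hl).not_gt (hr.trans_le ((min_le_right _ _).trans_eq (hD.1 k l)))

end Robinson

/-- A dissimilarity matrix is circular Robinson iff all its closed balls of
positive radius are arcs. -/
theorem statement4 (n : ℕ) [NeZero n] (D : Fin n → Fin n → ℝ) (hD : IsDissim D) :
    CircRobinson D ↔ ∀ (i : Fin n) (r : ℝ), 0 < r → IsArc n {j | D i j ≤ r} :=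
  ⟨fun hR i _ hr => hR.isArc_ball hD i hr.le, circRobinson_of_isArc_ball hD⟩
end

section
/- Let n ≥ 3 and let D be an n×n strict circular Robinson dissimilarity matrix. Then D satisfies the nearest-neighbour condition: for every i ∈ [n] and every j ≠ i with D(i,j) = min{D(i,k) : k ∈ [n], k ≠ i}, one has j = (i+1) mod n or j = (i−1) mod n. -/
/-- `D` is a strict circular Robinson matrix. -/
def StrictCircRobinson {n : ℕ} (D : Fin n → Fin n → ℝ) : Prop :=
  ∀ i j k l : Fin n, CycOrd4 i j k l → min (D j k) (D k l) < D i k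

/-- Strict circular Robinson matrices satisfy the nearest-neighbour condition. -/
theorem statement6 (n : ℕ) [NeZero n] (hn : 3 ≤ n) (D : Fin n → Fin n → ℝ)
    (hD : IsDissim D) (hR : StrictCircRobinson D) :
    ∀ i j : Fin n, j ≠ i → (∀ k : Fin n, k ≠ i → D i j ≤ D i k) →
      j = i + 1 ∨ j = i - 1 := by
  intro i j hji hmin
  by_contra h
  push_neg at h
  obtain ⟨h1, h2⟩ := h
  have hi := i.is_lt
  have hj := j.is_lt
  have h1n : (1 : Fin n).val = 1 := by
    rw [Fin.val_one']
    exact Nat.mod_eq_of_lt (by omega)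
  have v1 : (i + 1).val = (i.val + 1) % n := by rw [Fin.add_def, h1n]
  have v2 : (i - 1).val = (n - 1 + i.val) % n := by rw [Fin.sub_def, h1n]
  have w1 : (i.val + 1 < n ∧ (i + 1).val = i.val + 1) ∨
      (i.val = n - 1 ∧ (i + 1).val = 0) := by
    rcases Nat.lt_or_ge (i.val + 1) n with h | h
    · exact Or.inl ⟨h, by rw [v1, Nat.mod_eq_of_lt h]⟩
    · refine Or.inr ⟨by omega, ?_⟩
      rw [v1, show i.val + 1 = n by omega, Nat.mod_self]
  have w2 : (1 ≤ i.val ∧ (i - 1).val = i.val - 1) ∨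
      (i.val = 0 ∧ (i - 1).val = n - 1) := by
    rcases Nat.eq_zero_or_pos i.val with h | h
    · refine Or.inr ⟨h, ?_⟩
      rw [v2, h, Nat.add_zero, Nat.mod_eq_of_lt (by omega)]
    · refine Or.inl ⟨h, ?_⟩
      rw [v2, show n - 1 + i.val = n + (i.val - 1) by omega, Nat.add_mod_left,
        Nat.mod_eq_of_lt (by omega)]
  have hne1 : i + 1 ≠ i := by
    simp only [Fin.ext_iff, ne_eq]
    omega
  have hne2 : i - 1 ≠ i := by
    simp only [Fin.ext_iff, ne_eq]
    omega
  have hcyc : CycOrd4 j (i - 1) i (i + 1) := by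
    simp only [Fin.ext_iff, ne_eq] at h1 h2 hji
    simp only [CycOrd4, CycOrd, Fin.ext_iff, Fin.lt_def, ne_eq]
    omega
  have key := hR j (i - 1) i (i + 1) hcyc
  rw [hD.1 (i - 1) i, hD.1 j i] at key
  exact absurd key (not_lt.2 (le_min (hmin _ hne2) (hmin _ hne1)))
end

section
/- Let n ≥ 3, let D be an n×n dissimilarity matrix, and let π be a permutation of [n] such that the matrix (k,l) ↦ D(π(k), π(l)) is strict circular Robinson (i.e. π is a Robinson ordering for D). If i, j ∈ [n] with j ≠ i and D(i,j) = min{D(i,k) : k ∈ [n], k ≠ i} (j is a nearest neighbour of i), then i and j are consecutive in the ordering π: π⁻¹(j) = (π⁻¹(i) + 1) mod n or π⁻¹(j) = (π⁻¹(i) − 1) mod n. -/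
/-! If a nearest neighbour `b` of `a` were neither `a + 1` nor `a - 1`, then `b, a - 1, a, a + 1`
would be cyclically ordered, and the Robinson condition centred at `a` would make one of the two
cyclic neighbours of `a` strictly closer to `a` than `b`. -/

lemma cycOrd4_sub_one_self_add_one {n : ℕ} [NeZero n] {a b : Fin n} (hba : b ≠ a)
    (hb_succ : b ≠ a + 1) (hb_pred : b ≠ a - 1) : CycOrd4 b (a - 1) a (a + 1) := by
  obtain ⟨m, rfl⟩ := Nat.exists_eq_succ_of_ne_zero (NeZero.ne n)
  have h_succ := Fin.val_add_one a
  have h_pred := Fin.coe_sub_one a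
  -- hide the sums from `omega`, which cannot reduce `(a + 1) % (m + 1)` on its own
  generalize a + 1 = s at *
  generalize a - 1 = p at *
  simp only [CycOrd4, CycOrd, ne_eq, Fin.ext_iff, Fin.lt_def, Fin.val_last, Fin.val_zero] at *
  split_ifs at h_succ h_pred <;> omega

theorem StrictCircRobinson.eq_add_one_or_eq_sub_one_of_forall_le {n : ℕ} [NeZero n]
    {D : Fin n → Fin n → ℝ} (hD : StrictCircRobinson D) (hsym : ∀ k l, D k l = D l k)
    {a b : Fin n} (hba : b ≠ a) (hmin : ∀ k, k ≠ a → D a b ≤ D a k) :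
    b = a + 1 ∨ b = a - 1 := by
  by_contra! h
  have hcyc := cycOrd4_sub_one_self_add_one hba h.1 h.2
  have hlt : min (D a (a - 1)) (D a (a + 1)) < D a b := by
    simpa only [hsym (a - 1) a, hsym b a] using hD b (a - 1) a (a + 1) hcyc
  obtain ⟨-, -, -, h_pred, -, h_succ, -⟩ := hcyc
  exact (le_min (hmin _ h_pred) (hmin _ h_succ.symm)).not_gt hlt

theorem statement7_general (n : ℕ) [NeZero n] (D : Fin n → Fin n → ℝ)
    (hD : IsDissim D) (π : Equiv.Perm (Fin n))
    (hπ : StrictCircRobinson (fun k l => D (π k) (π l)))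
    (i j : Fin n) (hji : j ≠ i) (hmin : ∀ k : Fin n, k ≠ i → D i j ≤ D i k) :
    π.symm j = π.symm i + 1 ∨ π.symm j = π.symm i - 1 := by
  obtain ⟨hsym, -, -⟩ := hD
  refine hπ.eq_add_one_or_eq_sub_one_of_forall_le (fun k l => hsym _ _)
    (π.symm.injective.ne hji) fun k hk => ?_
  simpa only [Equiv.apply_symm_apply] using hmin (π k) fun h => hk (π.eq_symm_apply.mpr h)

/-- If `π` is a Robinson ordering for `D` (i.e. the `π`-conjugated matrix is strict
circular Robinson), then every nearest neighbour `j` of `i` is consecutive to `i`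
in the ordering `π`. -/
theorem statement7 (n : ℕ) [NeZero n] (hn : 3 ≤ n) (D : Fin n → Fin n → ℝ)
    (hD : IsDissim D) (π : Equiv.Perm (Fin n))
    (hπ : StrictCircRobinson (fun k l => D (π k) (π l)))
    (i j : Fin n) (hji : j ≠ i) (hmin : ∀ k : Fin n, k ≠ i → D i j ≤ D i k) :
    π.symm j = π.symm i + 1 ∨ π.symm j = π.symm i - 1 :=
  statement7_general n D hD π hπ i j hji hmin
end

section
/- Let D be an n×n circular Robinson (respectively strict circular Robinson) dissimilarity matrix, and let A₀, A₁, …, A_{m−1} be a partition of [n] into nonempty sets forming a consistent cyclic quasi-order, i.e. for all (i,j,k) ∈ 𝒞_m and all x ∈ A_i, y ∈ A_j, z ∈ A_k one has (x,y,z) ∈ 𝒞ₙ. Then the m×m matrix D^min defined by D^min(i,j) = min{D(k,l) : k ∈ A_i, l ∈ A_j} is a circular Robinson (respectively strict circular Robinson) dissimilarity matrix. -/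
/-- Taking entrywise minima over the classes of a consistent cyclic quasi-order
partition of a (strict) circular Robinson dissimilarity matrix again yields a
(strict) circular Robinson dissimilarity matrix. -/
theorem statement11 (n m : ℕ) (D : Fin n → Fin n → ℝ) (hD : IsDissim D)
    (A : Fin m → Finset (Fin n)) (hne : ∀ i, (A i).Nonempty)
    (hpart : ∀ x : Fin n, ∃! i : Fin m, x ∈ A i)
    (hcons : ∀ i j k : Fin m, CycOrd i j k →
      ∀ x ∈ A i, ∀ y ∈ A j, ∀ z ∈ A k, CycOrd x y z) :
    (CircRobinson D →
      IsDissim (fun i j : Fin m =>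
        ((A i) ×ˢ (A j)).inf' ((hne i).product (hne j)) fun p => D p.1 p.2) ∧
      CircRobinson (fun i j : Fin m =>
        ((A i) ×ˢ (A j)).inf' ((hne i).product (hne j)) fun p => D p.1 p.2)) ∧
    (StrictCircRobinson D →
      IsDissim (fun i j : Fin m =>
        ((A i) ×ˢ (A j)).inf' ((hne i).product (hne j)) fun p => D p.1 p.2) ∧
      StrictCircRobinson (fun i j : Fin m =>
        ((A i) ×ˢ (A j)).inf' ((hne i).product (hne j)) fun p => D p.1 p.2)) := by
  set Dm : Fin m → Fin m → ℝ := fun i j : Fin m =>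
    ((A i) ×ˢ (A j)).inf' ((hne i).product (hne j)) fun p => D p.1 p.2 with hDm
  -- distinct classes give distinct elements
  have hdist : ∀ {i j : Fin m} {x y : Fin n}, i ≠ j → x ∈ A i → y ∈ A j → x ≠ y := by
    intro i j x y hij hx hy
    rintro rfl
    exact hij ((hpart x).unique hx hy)
  have hle : ∀ (i j : Fin m) (x y : Fin n), x ∈ A i → y ∈ A j → Dm i j ≤ D x y := by
    intro i j x y hx hy
    have hm : (x, y) ∈ (A i) ×ˢ (A j) := Finset.mem_product.mpr ⟨hx, hy⟩
    exact Finset.inf'_le _ hm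
  have hex : ∀ i j : Fin m, ∃ x ∈ A i, ∃ y ∈ A j, Dm i j = D x y := by
    intro i j
    obtain ⟨p, hp, hep⟩ := Finset.exists_mem_eq_inf' ((hne i).product (hne j))
      (fun p : Fin n × Fin n => D p.1 p.2)
    rw [Finset.mem_product] at hp
    exact ⟨p.1, hp.1, p.2, hp.2, hep⟩
  have hdissim : IsDissim Dm := by
    refine ⟨?_, ?_, ?_⟩
    · intro i j
      have key : ∀ a b : Fin m, Dm a b ≤ Dm b a := by
        intro a b
        obtain ⟨x, hx, y, hy, hxy⟩ := hex b a
        calc Dm a b ≤ D y x := hle a b y x hy hx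
          _ = D x y := hD.1 y x
          _ = Dm b a := hxy.symm
      exact le_antisymm (key i j) (key j i)
    · intro i j
      obtain ⟨x, hx, y, hy, hxy⟩ := hex i j
      rw [hxy]; exact hD.2.1 x y
    · intro i
      obtain ⟨x, hx⟩ := hne i
      refine le_antisymm ?_ ?_
      · have := hle i i x x hx hx
        rwa [hD.2.2 x] at this
      · obtain ⟨y, hy, z, hz, hyz⟩ := hex i i
        rw [hyz]; exact hD.2.1 y z
  -- the key reduction
  have hkey : ∀ i j k l : Fin m, CycOrd4 i j k l →
      ∃ x y z w : Fin n, CycOrd4 x y z w ∧ Dm i k = D x z ∧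
        Dm j k ≤ D y z ∧ Dm k l ≤ D z w := by
    intro i j k l ⟨hij, hik, hil, hjk, hjl, hkl, h3, h4⟩
    obtain ⟨x, hx, z, hz, hxz⟩ := hex i k
    obtain ⟨y, hy⟩ := hne j
    obtain ⟨w, hw⟩ := hne l
    refine ⟨x, y, z, w, ⟨hdist hij hx hy, hdist hik hx hz, hdist hil hx hw,
      hdist hjk hy hz, hdist hjl hy hw, hdist hkl hz hw,
      hcons i j k h3 x hx y hy z hz, hcons i k l h4 x hx z hz w hw⟩,
      hxz, hle j k y z hy hz, hle k l z w hz hw⟩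
  constructor
  · intro hR
    refine ⟨hdissim, ?_⟩
    intro i j k l h
    obtain ⟨x, y, z, w, h4, he, h1, h2⟩ := hkey i j k l h
    rw [he]
    exact le_trans (min_le_min h1 h2) (hR x y z w h4)
  · intro hR
    refine ⟨hdissim, ?_⟩
    intro i j k l h
    obtain ⟨x, y, z, w, h4, he, h1, h2⟩ := hkey i j k l h
    rw [he]
    exact lt_of_le_of_lt (min_le_min h1 h2) (hR x y z w h4)
end

section
/- Let n ≥ 2 and let D be an n×n strict linear Robinson dissimilarity matrix. If π is a permutation of [n] such that the matrix (i,j) ↦ D(π(i), π(j)) is strict linear Robinson, then π is either the identity permutation or the reversal permutation πᵣ(i) = n−1−i. In other words, the set of solutions of the strict linear seriation problem for a strict linear Robinson matrix is exactly {identity, reversal}. -/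
/-- `D` is a strict linear Robinson matrix. -/
def StrictLinRobinson {n : ℕ} (D : Fin n → Fin n → ℝ) : Prop :=
  ∀ i j k : Fin n, i < j → j < k → max (D j i) (D j k) < D i k

private lemma strictMono_of_consec {n : ℕ} (f : Fin n → Fin n)
    (h : ∀ a (ha : a + 1 < n), f ⟨a, by omega⟩ < f ⟨a + 1, ha⟩) : StrictMono f := by
  have key : ∀ (k : ℕ) (hk : k < n) (i : Fin n), (i : ℕ) < k → f i < f ⟨k, hk⟩ := by
    intro k
    induction k with
    | zero => intro hk i hi; omega
    | succ k ih =>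
      intro hk i hi
      rcases Nat.lt_or_ge (i : ℕ) k with h' | h'
      · exact (ih (by omega) i h').trans (h k hk)
      · have : (i : ℕ) = k := by omega
        have hieq : i = ⟨k, by omega⟩ := Fin.ext this
        rw [hieq]; exact h k hk
  intro i j hij
  have := key (j : ℕ) j.isLt i hij
  simpa using this

private lemma le_apply_of_strictMono {n : ℕ} (f : Fin n → Fin n)
    (h : StrictMono f) : ∀ i : Fin n, i ≤ f i := by
  have key : ∀ (k : ℕ) (hk : k < n), k ≤ (f ⟨k, hk⟩ : ℕ) := by
    intro k
    induction k with
    | zero => intro hk; omega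
    | succ k ih =>
      intro hk
      have h1 := ih (by omega)
      have h2 : f ⟨k, by omega⟩ < f ⟨k + 1, hk⟩ := h (by simp [Fin.lt_def])
      simp only [Fin.lt_def] at h2
      omega
  intro i
  have := key (i : ℕ) i.isLt
  rw [Fin.le_def]
  exact this

private lemma perm_eq_refl_of_strictMono {n : ℕ} (π : Equiv.Perm (Fin n))
    (h : StrictMono π) : ∀ i, π i = i := by
  have hsymm : StrictMono ⇑π.symm := by
    intro a b hab
    rcases lt_trichotomy (π.symm a) (π.symm b) with hc | hc | hc
    · exact hc
    · exact absurd (π.symm.injective hc) hab.ne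
    · have := h hc
      simp only [Equiv.apply_symm_apply] at this
      exact absurd hab (not_lt.2 this.le)
  intro i
  have h1 := le_apply_of_strictMono _ h i
  have h2 := le_apply_of_strictMono _ hsymm (π i)
  simp only [Equiv.symm_apply_apply] at h2
  exact le_antisymm h2 h1

/-- The set of solutions of the strict linear seriation problem for a strict
linear Robinson matrix consists exactly of the identity and the reversal
`i ↦ n - 1 - i`. -/
theorem statement15 (n : ℕ) (hn : 2 ≤ n) (D : Fin n → Fin n → ℝ)
    (hD : IsDissim D) (hR : StrictLinRobinson D) :
    {π : Equiv.Perm (Fin n) | StrictLinRobinson fun i j => D (π i) (π j)} =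
      {Equiv.refl (Fin n), Fin.revPerm} := by
  obtain ⟨hsym, hpos, hdiag⟩ := hD
  ext π
  simp only [Set.mem_setOf_eq, Set.mem_insert_iff, Set.mem_singleton_iff]
  constructor
  · intro hE
    -- key betweenness property
    have key : ∀ i j k : Fin n, i < j → j < k →
        (π i < π j ∧ π j < π k) ∨ (π k < π j ∧ π j < π i) := by
      intro i j k hij hjk
      have hlt := hE i j k hij hjk
      simp only [max_lt_iff] at hlt
      obtain ⟨h1, h2⟩ := hlt
      rcases lt_trichotomy (π i) (π j) with ha | ha | ha
      · rcases lt_trichotomy (π j) (π k) with hb | hb | hb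
        · exact Or.inl ⟨ha, hb⟩
        · exact absurd (π.injective hb) (by omega)
        · rcases lt_trichotomy (π i) (π k) with hc | hc | hc
          · have := hR (π i) (π k) (π j) hc hb
            simp only [max_lt_iff] at this
            have e1 := hsym (π k) (π i)
            have e2 := hsym (π j) (π i)
            linarith [this.1]
          · exact absurd (π.injective hc) (by omega)
          · have := hR (π k) (π i) (π j) hc ha
            simp only [max_lt_iff] at this
            have e1 := hsym (π j) (π k)
            linarith [this.2]
      · exact absurd (π.injective ha) (by omega)
      · rcases lt_trichotomy (π j) (π k) with hb | hb | hb
        · rcases lt_trichotomy (π i) (π k) with hc | hc | hc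
          · have := hR (π j) (π i) (π k) ha hc
            simp only [max_lt_iff] at this
            linarith [this.2]
          · exact absurd (π.injective hc) (by omega)
          · have := hR (π j) (π k) (π i) hb hc
            simp only [max_lt_iff] at this
            have e1 := hsym (π k) (π i)
            linarith [this.1]
        · exact absurd (π.injective hb) (by omega)
        · exact Or.inr ⟨hb, ha⟩
    have h01 : (0 : ℕ) + 1 < n := by omega
    rcases lt_trichotomy (π ⟨0, by omega⟩) (π ⟨1, by omega⟩) with hc | hc | hc
    · -- monotone case
      left
      have consec : ∀ a (ha : a + 1 < n), π ⟨a, by omega⟩ < π ⟨a + 1, ha⟩ := by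
        intro a
        induction a with
        | zero => intro ha; exact hc
        | succ a ih =>
          intro ha
          have hprev := ih (by omega)
          have hk := key ⟨a, by omega⟩ ⟨a + 1, by omega⟩ ⟨a + 2, ha⟩
            (by simp [Fin.lt_def]) (by simp [Fin.lt_def])
          rcases hk with ⟨_, h2⟩ | ⟨_, h2⟩
          · exact h2
          · exact absurd hprev (not_lt.2 h2.le)
      have hmono := strictMono_of_consec π consec
      have := perm_eq_refl_of_strictMono π hmono
      exact Equiv.ext this
    · exact absurd (π.injective hc) (by simp [Fin.ext_iff])
    · -- antitone case
      right
      have consec : ∀ a (ha : a + 1 < n),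
          (π.trans Fin.revPerm) ⟨a, by omega⟩ < (π.trans Fin.revPerm) ⟨a + 1, ha⟩ := by
        have consec' : ∀ a (ha : a + 1 < n), π ⟨a + 1, ha⟩ < π ⟨a, by omega⟩ := by
          intro a
          induction a with
          | zero => intro ha; exact hc
          | succ a ih =>
            intro ha
            have hprev := ih (by omega)
            have hk := key ⟨a, by omega⟩ ⟨a + 1, by omega⟩ ⟨a + 2, ha⟩
              (by simp [Fin.lt_def]) (by simp [Fin.lt_def])
            rcases hk with ⟨h1, _⟩ | ⟨h1, _⟩
            · exact absurd hprev (not_lt.2 h1.le)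
            · exact h1
        intro a ha
        simp only [Equiv.trans_apply, Fin.revPerm_apply]
        exact Fin.rev_lt_rev.2 (consec' a ha)
      have hmono := strictMono_of_consec (π.trans Fin.revPerm) consec
      have := perm_eq_refl_of_strictMono _ hmono
      apply Equiv.ext; intro i
      have hi := this i
      simp only [Equiv.trans_apply, Fin.revPerm_apply] at hi
      have : π i = (π i).rev.rev := (Fin.rev_rev _).symm
      rw [this, hi]
      rfl
  · intro hπ
    rcases hπ with rfl | rfl
    · simpa using hR
    · intro i j k hij hjk
      have := hR k.rev j.rev i.rev (Fin.rev_lt_rev.2 hjk) (Fin.rev_lt_rev.2 hij)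
      simp only [max_lt_iff] at this ⊢
      have e1 := hsym (k.rev) (i.rev)
      have e2 := hsym (j.rev) (k.rev)
      simp only [Fin.revPerm_apply]
      constructor <;> linarith [this.1, this.2]
end

section
/- Let d be a dissimilarity on [0,1) that is continuous (with respect to the metric Arc) and strict circular Robinson. Let 0 ≤ a < b < 1 and define σ : [0,1) → [0,1) by σ(t) = a + b − t for t ∈ [a,b] and σ(t) = t otherwise (σ reverses the arc [a,b] and fixes its complement). Then the dissimilarity (x,y) ↦ d(σ(x), σ(y)) is not strict circular Robinson. -/
open Set

/-- Arc-length metric on the circle `[0,1)`. -/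
noncomputable def ArcDist (s t : ℝ) : ℝ := min |s - t| (1 - |s - t|)

/-- The natural cyclic order on `[0,1)`. -/
def CycR (x y z : ℝ) : Prop := (x < y ∧ y < z) ∨ (y < z ∧ z < x) ∨ (z < x ∧ x < y)

/-- `d` is a dissimilarity on `[0,1)`: nonnegative, symmetric and zero on the diagonal. -/
def DissimOn (d : ℝ → ℝ → ℝ) : Prop :=
  (∀ x ∈ Ico (0:ℝ) 1, ∀ y ∈ Ico (0:ℝ) 1, 0 ≤ d x y ∧ d x y = d y x) ∧
  (∀ x ∈ Ico (0:ℝ) 1, d x x = 0)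

/-- `d` is (jointly) continuous on `[0,1)` with respect to the metric `ArcDist`. -/
def ContinuousArcOn (d : ℝ → ℝ → ℝ) : Prop :=
  ∀ x ∈ Ico (0:ℝ) 1, ∀ y ∈ Ico (0:ℝ) 1, ∀ ε : ℝ, 0 < ε → ∃ δ : ℝ, 0 < δ ∧
    ∀ x' ∈ Ico (0:ℝ) 1, ∀ y' ∈ Ico (0:ℝ) 1,
      ArcDist x x' < δ → ArcDist y y' < δ → |d x' y' - d x y| < ε

/-- `d` is strict circular Robinson on `[0,1)`. -/
def StrictCircRobinsonOn (d : ℝ → ℝ → ℝ) : Prop :=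
  ∀ w ∈ Ico (0:ℝ) 1, ∀ x ∈ Ico (0:ℝ) 1, ∀ y ∈ Ico (0:ℝ) 1, ∀ z ∈ Ico (0:ℝ) 1,
    w ≠ x → w ≠ y → w ≠ z → x ≠ y → x ≠ z → y ≠ z →
    CycR w x y → CycR w y z → min (d y x) (d y z) < d y w

/-- Reversing the arc `[a,b]` of a continuous strict circular Robinson
dissimilarity never yields a strict circular Robinson dissimilarity. -/
theorem statement16 (d : ℝ → ℝ → ℝ) (hd : DissimOn d) (hc : ContinuousArcOn d)
    (hR : StrictCircRobinsonOn d) (a b : ℝ) (ha : 0 ≤ a) (hab : a < b) (hb : b < 1) :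
    ¬ StrictCircRobinsonOn (fun x y =>
        d (if a ≤ x ∧ x ≤ b then a + b - x else x)
          (if a ≤ y ∧ y ≤ b then a + b - y else y)) := by
  intro hK
  have hb0 : (0:ℝ) ≤ b := le_trans ha (le_of_lt hab)
  set m : ℝ := (a + b) / 2 with hm_def
  set t : ℝ := (b + 1) / 2 with ht_def
  have ham : a < m := by rw [hm_def]; linarith
  have hmb : m < b := by rw [hm_def]; linarith
  have hbt : b < t := by rw [ht_def]; linarith
  have ht1 : t < 1 := by rw [ht_def]; linarith
  have hbI : b ∈ Ico (0:ℝ) 1 := ⟨hb0, hb⟩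
  have hmI : m ∈ Ico (0:ℝ) 1 := ⟨by linarith, by linarith⟩
  have htI : t ∈ Ico (0:ℝ) 1 := ⟨by linarith, by linarith⟩
  -- auxiliary points for positivity
  set x₀ : ℝ := (m + b) / 2 with hx₀_def
  set z₀ : ℝ := (b + t) / 2 with hz₀_def
  have hmx₀ : m < x₀ := by rw [hx₀_def]; linarith
  have hx₀b : x₀ < b := by rw [hx₀_def]; linarith
  have hbz₀ : b < z₀ := by rw [hz₀_def]; linarith
  have hz₀t : z₀ < t := by rw [hz₀_def]; linarith
  have hx₀I : x₀ ∈ Ico (0:ℝ) 1 := ⟨by linarith, by linarith⟩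
  have hz₀I : z₀ ∈ Ico (0:ℝ) 1 := ⟨by linarith, by linarith⟩
  -- positivity of d b m
  have h1 : min (d b x₀) (d b t) < d b m :=
    hR m hmI x₀ hx₀I b hbI t htI (ne_of_lt hmx₀) (ne_of_lt (lt_trans hmx₀ hx₀b))
      (ne_of_lt (by linarith)) (ne_of_lt hx₀b) (ne_of_lt (by linarith)) (ne_of_lt hbt)
      (Or.inl ⟨hmx₀, hx₀b⟩) (Or.inl ⟨hmb, hbt⟩)
  have hdbm : 0 < d b m :=
    lt_of_le_of_lt (le_min (hd.1 b hbI x₀ hx₀I).1 (hd.1 b hbI t htI).1) h1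
  -- positivity of d b t
  have h2 : min (d b m) (d b z₀) < d b t :=
    hR t htI m hmI b hbI z₀ hz₀I (ne_of_gt (by linarith)) (ne_of_gt hbt)
      (ne_of_gt hz₀t) (ne_of_lt hmb) (ne_of_lt (by linarith)) (ne_of_lt hbz₀)
      (Or.inr (Or.inl ⟨hmb, hbt⟩)) (Or.inr (Or.inl ⟨hbz₀, hz₀t⟩))
  have hdbt : 0 < d b t :=
    lt_of_le_of_lt (le_min (hd.1 b hbI m hmI).1 (hd.1 b hbI z₀ hz₀I).1) h2
  set ε : ℝ := min (d b m) (d b t) / 2 with hε_def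
  have hεpos : 0 < ε := by
    rw [hε_def]; have := lt_min hdbm hdbt; linarith
  obtain ⟨δ₀, hδ₀, H₀⟩ := hc b hbI b hbI ε hεpos
  obtain ⟨δ₁, hδ₁, H₁⟩ := hc b hbI m hmI ε hεpos
  obtain ⟨δ₂, hδ₂, H₂⟩ := hc b hbI t htI ε hεpos
  set M : ℝ := min (min δ₀ (min δ₁ δ₂)) (min ((1 - b) / 2) ((b - a) / 2)) with hM_def
  have hMpos : 0 < M :=
    lt_min (lt_min hδ₀ (lt_min hδ₁ hδ₂)) (lt_min (by linarith) (by linarith))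
  have hM0 : M ≤ δ₀ := le_trans (min_le_left _ _) (min_le_left _ _)
  have hM1 : M ≤ δ₁ := le_trans (min_le_left _ _) (le_trans (min_le_right _ _) (min_le_left _ _))
  have hM2 : M ≤ δ₂ := le_trans (min_le_left _ _) (le_trans (min_le_right _ _) (min_le_right _ _))
  have hM3 : M ≤ (1 - b) / 2 := le_trans (min_le_right _ _) (min_le_left _ _)
  have hM4 : M ≤ (b - a) / 2 := le_trans (min_le_right _ _) (min_le_right _ _)
  set η : ℝ := M / 2 with hη_def
  have hηpos : 0 < η := by rw [hη_def]; linarith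
  have hη0 : η < δ₀ := by rw [hη_def]; linarith
  have hη1 : η < δ₁ := by rw [hη_def]; linarith
  have hη2 : η < δ₂ := by rw [hη_def]; linarith
  have hη3 : η < (1 - b) / 2 := by rw [hη_def]; linarith
  have hη4 : η < (b - a) / 2 := by rw [hη_def]; linarith
  set p : ℝ := b + η with hp_def
  set q : ℝ := a + η with hq_def
  set s : ℝ := b - η with hs_def
  have hbp : b < p := by rw [hp_def]; linarith
  have hp1 : p < 1 := by rw [hp_def]; linarith
  have hpt : p < t := by rw [hp_def, ht_def]; linarith
  have haq : a < q := by rw [hq_def]; linarith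
  have hqm : q < m := by rw [hq_def, hm_def]; linarith
  have has : a < s := by rw [hs_def]; linarith
  have hsb : s < b := by rw [hs_def]; linarith
  have hpI : p ∈ Ico (0:ℝ) 1 := ⟨by linarith, hp1⟩
  have hqI : q ∈ Ico (0:ℝ) 1 := ⟨by linarith, by linarith⟩
  have hsI : s ∈ Ico (0:ℝ) 1 := ⟨by linarith, by linarith⟩
  -- apply the assumed Robinson property of the reversed dissimilarity
  have key := hK q hqI m hmI p hpI t htI (ne_of_lt hqm) (ne_of_lt (by linarith))
    (ne_of_lt (by linarith)) (ne_of_lt (by linarith)) (ne_of_lt (by linarith))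
    (ne_of_lt hpt) (Or.inl ⟨hqm, by linarith⟩) (Or.inl ⟨by linarith, hpt⟩)
  simp only at key
  have e1 : (if a ≤ p ∧ p ≤ b then a + b - p else p) = p :=
    if_neg (by push_neg; intro _; linarith)
  have e2 : (if a ≤ m ∧ m ≤ b then a + b - m else m) = m := by
    rw [if_pos ⟨le_of_lt ham, le_of_lt hmb⟩, hm_def]; ring
  have e3 : (if a ≤ t ∧ t ≤ b then a + b - t else t) = t :=
    if_neg (by push_neg; intro _; linarith)
  have e4 : (if a ≤ q ∧ q ≤ b then a + b - q else q) = s := by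
    rw [if_pos ⟨le_of_lt haq, by linarith⟩, hq_def, hs_def]; ring
  rw [e1, e2, e3, e4] at key
  -- key : min (d p m) (d p t) < d p s
  have arc_le : ∀ u v : ℝ, ArcDist u v ≤ |u - v| := fun u v => min_le_left _ _
  have habp : |b - p| = η := by
    rw [hp_def, show b - (b + η) = -η by ring, abs_neg, abs_of_pos hηpos]
  have habs : |b - s| = η := by
    rw [hs_def, show b - (b - η) = η by ring, abs_of_pos hηpos]
  have arcbp : ArcDist b p ≤ η := by rw [← habp]; exact arc_le b p
  have arcbs : ArcDist b s ≤ η := by rw [← habs]; exact arc_le b s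
  have arcmm : ArcDist m m = 0 := by simp [ArcDist]
  have arctt : ArcDist t t = 0 := by simp [ArcDist]
  have hdbb : d b b = 0 := hd.2 b hbI
  have c0 : |d p s - d b b| < ε :=
    H₀ p hpI s hsI (lt_of_le_of_lt arcbp hη0) (lt_of_le_of_lt arcbs hη0)
  have c1 : |d p m - d b m| < ε :=
    H₁ p hpI m hmI (lt_of_le_of_lt arcbp hη1) (by rw [arcmm]; exact hδ₁)
  have c2 : |d p t - d b t| < ε :=
    H₂ p hpI t htI (lt_of_le_of_lt arcbp hη2) (by rw [arctt]; exact hδ₂)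
  rw [hdbb, sub_zero] at c0
  have hps : d p s < ε := lt_of_le_of_lt (le_abs_self _) c0
  have hεm : ε < d p m := by
    have := abs_lt.mp c1
    have hle : min (d b m) (d b t) ≤ d b m := min_le_left _ _
    rw [hε_def] at *; linarith
  have hεt : ε < d p t := by
    have := abs_lt.mp c2
    have hle : min (d b m) (d b t) ≤ d b t := min_le_right _ _
    rw [hε_def] at *; linarith
  have : ε < min (d p m) (d p t) := lt_min hεm hεt
  linarith
end

section
/- Let d be a dissimilarity on [0,1) that is continuous (with respect to the metric Arc) and strict circular Robinson. Let Dih_∞ be the subgroup of the group of bijections of [0,1) generated by the cyclic shifts π_u(x) = (x+u) mod 1 for u ∈ [0,1) together with the reversal πᵣ(x) = (−x) mod 1. For distinct t, s ∈ [0,1), let I(t,s) = {x ∈ [0,1) : (t,x,s) ∈ 𝒞} and let σ_{t,s} be the bijection of [0,1) defined by σ_{t,s}(x) = (t + s − x) mod 1 for x ∈ I(t,s) and σ_{t,s}(x) = x otherwise, and let G be the subgroup generated by all σ_{t,s}. If π = g ∘ h with g ∈ Dih_∞ and h ∈ G, and the dissimilarity (x,y) ↦ d(π(x), π(y)) is strict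 circular Robinson, then π ∈ Dih_∞. -/
open Set

/-- The circle, modeled as the half-open interval `[0,1)`. -/
abbrev Circ : Type := ↥(Set.Ico (0:ℝ) 1)

/-- The fractional part, as an element of the circle `[0,1)`. -/
noncomputable def fractC (x : ℝ) : Circ :=
  ⟨Int.fract x, Int.fract_nonneg x, Int.fract_lt_one x⟩

/-- The cyclic shift `x ↦ (x + u) mod 1` on the circle. -/
noncomputable def shiftFun (u : ℝ) : Circ → Circ := fun x => fractC (x.1 + u)

/-- The reversal `x ↦ (-x) mod 1` on the circle. -/
noncomputable def revFun : Circ → Circ := fun x => fractC (-x.1)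

open Classical in
/-- The map reversing the open arc `I(t,s) = {x | (t,x,s) ∈ 𝒞}` of the circle,
`x ↦ (t + s - x) mod 1` on `I(t,s)`, and the identity elsewhere. -/
noncomputable def arcRevFun (t s : Circ) : Circ → Circ := fun x =>
  if CycR t.1 x.1 s.1 then fractC (t.1 + s.1 - x.1) else x

/-- The infinite dihedral group: the subgroup of bijections of the circle generated
by all the cyclic shifts together with the reversal. -/
noncomputable def DihInf : Subgroup (Equiv.Perm Circ) :=
  Subgroup.closure
    ({π : Equiv.Perm Circ | ∃ u ∈ Set.Ico (0:ℝ) 1, ⇑π = shiftFun u} ∪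
     {π : Equiv.Perm Circ | ⇑π = revFun})

/-- The subgroup of bijections of the circle generated by all arc reversals. -/
noncomputable def GInf : Subgroup (Equiv.Perm Circ) :=
  Subgroup.closure {π : Equiv.Perm Circ | ∃ t s : Circ, t ≠ s ∧ ⇑π = arcRevFun t s}

/-- `d` is a dissimilarity on the circle. -/
def DissimC (d : Circ → Circ → ℝ) : Prop :=
  (∀ x y, 0 ≤ d x y ∧ d x y = d y x) ∧ (∀ x, d x x = 0)

/-- `d` is (jointly) continuous with respect to the metric `ArcDist`. -/
def ContinuousArcC (d : Circ → Circ → ℝ) : Prop :=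
  ∀ x y : Circ, ∀ ε : ℝ, 0 < ε → ∃ δ : ℝ, 0 < δ ∧
    ∀ x' y' : Circ, ArcDist x.1 x'.1 < δ → ArcDist y.1 y'.1 < δ →
      |d x' y' - d x y| < ε

/-- `d` is strict circular Robinson on the circle. -/
def StrictCircRobinsonC (d : Circ → Circ → ℝ) : Prop :=
  ∀ w x y z : Circ,
    w ≠ x → w ≠ y → w ≠ z → x ≠ y → x ≠ z → y ≠ z →
    CycR w.1 x.1 y.1 → CycR w.1 y.1 z.1 → min (d y x) (d y z) < d y w

/-!
Elements of `DihInf` are lifts of `x ↦ ±x + c`, and an arc reversal is of this form near every point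
other than the two ends of its arc. Hence `π` is a bijection of the circle which is locally of the
form `x ↦ ±x + c` away from finitely many break points. At any point `p` and for `w` outside
`[p - h, p + h]`, the Robinson inequality for `d ∘ π` at `(w, p - h, p, p + h)` bounds
`d (π p) (π w)` below by a constant which is positive because `d` is; by continuity of `d`, all
points near `π p` are thus images of points within `h` of `p`. The images of the two sides of `p`
are short arcs starting at the one-sided limits of `π`, so both limits equal `π p` and the two
slopes agree: `π` has no break points at all, and by connectedness it is globally `x ↦ ±x + c`.
-/

lemma fractC_self (x : Circ) : fractC x.1 = x :=
  Subtype.ext (Int.fract_eq_self.2 x.2)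

lemma fractC_eq_fractC_iff {a b : ℝ} : fractC a = fractC b ↔ ∃ k : ℤ, a - b = k :=
  Subtype.ext_iff.trans Int.fract_eq_fract

lemma fractC_eq_fractC_iff_coe {a b : ℝ} :
    fractC a = fractC b ↔ (a : UnitAddCircle) = (b : UnitAddCircle) := by
  rw [fractC_eq_fractC_iff, ← sub_eq_zero, ← AddCircle.coe_sub, AddCircle.coe_eq_zero_iff]
  simp [eq_comm]

lemma coe_fractC (a : ℝ) : (((fractC a : Circ) : ℝ) : UnitAddCircle) = a := by
  rw [← fractC_eq_fractC_iff_coe, fractC_self]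

lemma eq_zero_of_eq_intCast {x : ℝ} {k : ℤ} (hk : x = k) (hx : |x| < 1) : x = 0 := by
  rw [hk, ← Int.cast_abs, ← Int.cast_one, Int.cast_lt, Int.abs_lt_one_iff] at hx
  rw [hk, hx, Int.cast_zero]

lemma eq_of_fractC_eq {a b : ℝ} (h : fractC a = fractC b) (hab : |a - b| < 1) : a = b := by
  obtain ⟨k, hk⟩ := fractC_eq_fractC_iff.1 h
  exact sub_eq_zero.1 (eq_zero_of_eq_intCast hk hab)

lemma fractC_ne_of_abs_lt {a b : ℝ} (hne : a ≠ b) (hab : |a - b| < 1) : fractC a ≠ fractC b :=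
  fun h => hne (eq_of_fractC_eq h hab)

lemma coe_ne_zero_of_abs_lt {x : ℝ} (h0 : x ≠ 0) (h1 : |x| < 1) : (x : UnitAddCircle) ≠ 0 := by
  intro hx
  rw [← AddCircle.coe_zero, ← fractC_eq_fractC_iff_coe] at hx
  exact h0 (eq_of_fractC_eq hx (by simpa using h1))

lemma exists_fractC_eq (w : Circ) (q : ℝ) : ∃ t, q ≤ t ∧ t < q + 1 ∧ fractC t = w := by
  refine ⟨q + Int.fract (w.1 - q), by linarith [Int.fract_nonneg (w.1 - q)],
    by linarith [Int.fract_lt_one (w.1 - q)], ?_⟩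
  refine (fractC_eq_fractC_iff.2 ⟨-⌊w.1 - q⌋, ?_⟩).trans (fractC_self w)
  rw [Int.fract]; push_cast; ring

lemma arcDist_eq_norm (s t : Circ) : ArcDist s.1 t.1 = ‖((s.1 - t.1 : ℝ) : UnitAddCircle)‖ := by
  have habs : ‖((s.1 - t.1 : ℝ) : UnitAddCircle)‖ = ‖((|s.1 - t.1| : ℝ) : UnitAddCircle)‖ := by
    rcases abs_choice (s.1 - t.1) with h | h <;> rw [h]
    rw [AddCircle.coe_neg, norm_neg]
  have hlt : |s.1 - t.1| < 1 := by
    rw [abs_lt]; constructor <;> linarith [s.2.1, s.2.2, t.2.1, t.2.2]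
  rw [habs, UnitAddCircle.norm_eq, abs_sub_round_eq_min,
    Int.fract_eq_self.2 ⟨abs_nonneg _, hlt⟩, ArcDist]

lemma norm_coe_le_abs (x : ℝ) : ‖(x : UnitAddCircle)‖ ≤ |x| := by
  simpa using QuotientAddGroup.norm_mk_le_norm (S := AddSubgroup.zmultiples (1 : ℝ)) (m := x)

lemma arcDist_fractC_le (s : Circ) (y : ℝ) : ArcDist s.1 (fractC y).1 ≤ |s.1 - y| := by
  rw [arcDist_eq_norm, AddCircle.coe_sub, coe_fractC, ← AddCircle.coe_sub]
  exact norm_coe_le_abs _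

lemma fract_sub_eq_ite (a b : Circ) :
    Int.fract (a.1 - b.1) = if b.1 ≤ a.1 then a.1 - b.1 else a.1 - b.1 + 1 := by
  obtain ⟨⟨ha0, ha1⟩, ⟨hb0, hb1⟩⟩ := And.intro a.2 b.2
  split_ifs with h
  · exact Int.fract_eq_self.2 ⟨by linarith, by linarith⟩
  · exact Int.fract_eq_iff.2 ⟨by linarith, by linarith, -1, by push_cast; ring⟩

lemma cycR_iff_fract (t x s : Circ) :
    CycR t.1 x.1 s.1 ↔
      0 < Int.fract (x.1 - t.1) ∧ Int.fract (x.1 - t.1) < Int.fract (s.1 - t.1) := by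
  have hx := x.2
  have hs := s.2
  rw [fract_sub_eq_ite, fract_sub_eq_ite, CycR]
  split_ifs <;> constructor <;> intro h <;> grind

lemma cycR_fractC {a b c : ℝ} (hab : a < b) (hbc : b < c) (hca : c < a + 1) :
    CycR (fractC a).1 (fractC b).1 (fractC c).1 := by
  have key : ∀ y, a ≤ y → y < a + 1 → Int.fract ((fractC y).1 - (fractC a).1) = y - a := by
    intro y h1 h2
    refine Int.fract_eq_iff.2 ⟨by linarith, by linarith, ⌊a⌋ - ⌊y⌋, ?_⟩
    simp only [fractC, Int.fract]; push_cast; ring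
  rw [cycR_iff_fract, key b hab.le (by linarith), key c (by linarith) hca]
  constructor <;> linarith

lemma CycR.ne {a b c : ℝ} (h : CycR a b c) : a ≠ b ∧ b ≠ c ∧ a ≠ c := by
  rcases h with h | h | h <;> refine ⟨?_, ?_, ?_⟩ <;> intro <;> linarith [h.1, h.2]

lemma CycR.not_cycR_swap {a b c : ℝ} (h : CycR a b c) : ¬ CycR a c b := by
  rcases h with h | h | h <;> rintro (h' | h' | h') <;> linarith [h.1, h.2, h'.1, h'.2]

lemma StrictCircRobinsonC.lt_of_cycR {d : Circ → Circ → ℝ} (hR : StrictCircRobinsonC d)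
    {w x y z : Circ} (h₁ : CycR w.1 x.1 y.1) (h₂ : CycR w.1 y.1 z.1) :
    min (d y x) (d y z) < d y w := by
  obtain ⟨hwx, hxy, hwy⟩ := h₁.ne
  obtain ⟨-, hyz, hwz⟩ := h₂.ne
  have hxz : x ≠ z := by
    rintro rfl
    exact h₁.not_cycR_swap h₂
  exact hR w x y z (ne_of_apply_ne _ hwx) (ne_of_apply_ne _ hwy) (ne_of_apply_ne _ hwz)
    (ne_of_apply_ne _ hxy) hxz (ne_of_apply_ne _ hyz) h₁ h₂

lemma DissimC.pos_of_strictCircRobinsonC {d : Circ → Circ → ℝ} (hd : DissimC d)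
    (hR : StrictCircRobinsonC d) {u v : Circ} (huv : u ≠ v) : 0 < d u v := by
  obtain ⟨t, hut, htu, rfl⟩ := exists_fractC_eq v u.1
  have hut' : u.1 < t := lt_of_le_of_ne hut fun h => huv (by rw [← h, fractC_self])
  have h₁ := cycR_fractC (a := u.1) (b := (u.1 + t) / 2) (c := t) (by linarith) (by linarith)
    (by linarith)
  have h₂ := cycR_fractC (a := u.1) (b := t) (c := (t + u.1 + 1) / 2) (by linarith) (by linarith)
    (by linarith)
  rw [fractC_self] at h₁ h₂
  have hlt := hR.lt_of_cycR h₁ h₂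
  rw [(hd.1 _ _).2]
  exact lt_of_le_of_lt (le_min (hd.1 _ _).1 (hd.1 _ _).1) hlt

def LocallyAffineAt (Φ : ℝ → Circ) (t : ℝ) : Prop :=
  ∃ δ > 0, ∃ ε c : ℝ, |ε| = 1 ∧ ∀ u, |u - t| < δ → Φ u = fractC (ε * u + c)

lemma LocallyAffineAt.of_fractC_eq {F : Circ → Circ} {y y' : ℝ}
    (h : LocallyAffineAt (F ∘ fractC) y) (hy : fractC y = fractC y') :
    LocallyAffineAt (F ∘ fractC) y' := by
  obtain ⟨δ, hδ, ε, c, hε, hF⟩ := h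
  obtain ⟨k, hk⟩ := fractC_eq_fractC_iff.1 hy
  refine ⟨δ, hδ, ε, c + ε * k, hε, fun u hu => ?_⟩
  have hu' : |(u + k) - y| < δ := by rwa [show u + k - y = u - y' by linarith]
  have hper : fractC (u + k) = fractC u := fractC_eq_fractC_iff.2 ⟨k, by ring⟩
  simp only [Function.comp_apply] at hF ⊢
  rw [← hper, hF _ hu']
  ring_nf

lemma LocallyAffineAt.comp {F G : Circ → Circ} {t : ℝ} (hG : LocallyAffineAt (G ∘ fractC) t)
    (hF : LocallyAffineAt (F ∘ fractC) (G (fractC t)).1) :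
    LocallyAffineAt ((F ∘ G) ∘ fractC) t := by
  obtain ⟨δ₁, hδ₁, ε₁, c₁, hε₁, hG⟩ := hG
  have hGt : G (fractC t) = fractC (ε₁ * t + c₁) := hG t (by simpa using hδ₁)
  obtain ⟨δ₂, hδ₂, ε₂, c₂, hε₂, hF⟩ :=
    hF.of_fractC_eq (y' := ε₁ * t + c₁) (by rw [fractC_self, hGt])
  refine ⟨min δ₁ δ₂, lt_min hδ₁ hδ₂, ε₂ * ε₁, ε₂ * c₁ + c₂, by rw [abs_mul, hε₁, hε₂, one_mul],
    fun u hu => ?_⟩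
  have hu' : |(ε₁ * u + c₁) - (ε₁ * t + c₁)| < δ₂ := by
    rw [show ε₁ * u + c₁ - (ε₁ * t + c₁) = ε₁ * (u - t) by ring, abs_mul, hε₁, one_mul]
    exact hu.trans_le (min_le_right _ _)
  simp only [Function.comp_apply] at hG hF ⊢
  rw [hG u (hu.trans_le (min_le_left _ _)), hF _ hu']
  ring_nf

lemma LocallyAffineAt.perm_inv {π : Equiv.Perm Circ} {t : ℝ}
    (h : LocallyAffineAt (π ∘ fractC) t) : LocallyAffineAt (⇑π⁻¹ ∘ fractC) (π (fractC t)).1 := by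
  obtain ⟨δ, hδ, ε, c, hε, hπ⟩ := h
  have hεε : ε * ε = 1 := by rw [← abs_mul_abs_self, hε, one_mul]
  have hπt : π (fractC t) = fractC (ε * t + c) := hπ t (by simpa using hδ)
  suffices LocallyAffineAt (⇑π⁻¹ ∘ fractC) (ε * t + c) from
    this.of_fractC_eq (by rw [hπt, fractC_self])
  refine ⟨δ, hδ, ε, -(ε * c), hε, fun y hy => ?_⟩
  have hu : |ε * y + -(ε * c) - t| < δ := by
    rw [show ε * y + -(ε * c) - t = ε * (y - (ε * t + c)) by linear_combination t * hεε,
      abs_mul, hε, one_mul]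
    exact hy
  have hπu := hπ _ hu
  rw [show ε * (ε * y + -(ε * c)) + c = y by linear_combination (y - c) * hεε] at hπu
  rw [Function.comp_apply, ← hπu]
  exact π.symm_apply_apply _

lemma locallyAffineAt_of_forall_eq {F : Circ → Circ} {ε c : ℝ} (hε : |ε| = 1)
    (hF : ∀ x : Circ, F x = fractC (ε * x.1 + c)) (t : ℝ) : LocallyAffineAt (F ∘ fractC) t := by
  refine ⟨1, one_pos, ε, c, hε, fun u _ => ?_⟩
  rw [Function.comp_apply, hF, fractC_eq_fractC_iff]
  rcases (abs_eq zero_le_one).1 hε with rfl | rfl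
  · exact ⟨-⌊u⌋, by simp only [fractC, Int.fract]; push_cast; ring⟩
  · exact ⟨⌊u⌋, by simp only [fractC, Int.fract]; ring⟩

lemma fractC_affine_eq_of_eqOn_ball {ε₁ c₁ ε₂ c₂ t δ : ℝ} (hε₁ : |ε₁| = 1) (hε₂ : |ε₂| = 1)
    (hδ : 0 < δ) (h : ∀ u, |u - t| < δ → fractC (ε₁ * u + c₁) = fractC (ε₂ * u + c₂)) (u : ℝ) :
    fractC (ε₁ * u + c₁) = fractC (ε₂ * u + c₂) := by
  obtain ⟨η, hη0, hηδ, hη1⟩ : ∃ η > 0, η < δ ∧ 2 * η < 1 :=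
    ⟨min δ 1 / 4, by positivity, by linarith [min_le_left δ 1], by linarith [min_le_right δ 1]⟩
  obtain ⟨k₁, hk₁⟩ := fractC_eq_fractC_iff.1 (h t (by simpa using hδ))
  obtain ⟨k₂, hk₂⟩ := fractC_eq_fractC_iff.1 (h (t + η) (by simpa [abs_of_pos hη0] using hηδ))
  have hslope : (ε₁ - ε₂) * η = 0 := by
    refine eq_zero_of_eq_intCast (k := k₂ - k₁) (by push_cast; linear_combination hk₂ - hk₁) ?_
    rw [abs_mul, abs_of_pos hη0]
    calc |ε₁ - ε₂| * η ≤ 2 * η := by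
          gcongr; linarith [abs_sub ε₁ ε₂]
      _ < 1 := hη1
  have hε : ε₁ = ε₂ := by
    linarith [(mul_eq_zero.1 hslope).resolve_right hη0.ne']
  exact fractC_eq_fractC_iff.2 ⟨k₁, by rw [← hk₁, hε]; ring⟩

lemma exists_affine_of_isPreconnected {Φ : ℝ → Circ} {S : Set ℝ} (hS : IsPreconnected S)
    (H : ∀ t ∈ S, LocallyAffineAt Φ t) :
    ∃ ε c : ℝ, |ε| = 1 ∧ ∀ t ∈ S, Φ t = fractC (ε * t + c) := by
  rcases S.eq_empty_or_nonempty with rfl | ⟨t₀, ht₀⟩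
  · exact ⟨1, 0, abs_one, by simp⟩
  obtain ⟨δ₀, hδ₀, ε, c, hε, h₀⟩ := H t₀ ht₀
  set U := {t | ∃ δ > 0, ∀ u, |u - t| < δ → Φ u = fractC (ε * u + c)}
  have hU : IsOpen U := by
    refine Metric.isOpen_iff.2 fun t ⟨δ, hδ, h⟩ => ⟨δ / 2, half_pos hδ, fun t' ht' => ?_⟩
    rw [Metric.mem_ball, Real.dist_eq] at ht'
    exact ⟨δ / 2, half_pos hδ, fun u hu => h u (by linarith [abs_sub_le u t' t])⟩
  have hSU : S ⊆ U := by
    refine hS.subset_of_closure_inter_subset hU ⟨t₀, ht₀, δ₀, hδ₀, h₀⟩ ?_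
    rintro t ⟨htU, htS⟩
    obtain ⟨δ, hδ, ε', c', hε', ht⟩ := H t htS
    obtain ⟨t', ⟨δ', hδ', ht'⟩, htt'⟩ := Metric.mem_closure_iff.1 htU δ hδ
    rw [Real.dist_eq] at htt'
    have hagree := fractC_affine_eq_of_eqOn_ball (t := t') hε' hε
      (lt_min hδ' (sub_pos.2 htt')) fun u hu => by
        have hu' : |u - t| < δ := by
          linarith [abs_sub_le u t' t, abs_sub_comm t t', min_le_right δ' (δ - |t - t'|)]
        exact (ht u hu').symm.trans (ht' u (hu.trans_le (min_le_left _ _)))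
    exact ⟨δ, hδ, fun u hu => (ht u hu).trans (hagree u)⟩
  refine ⟨ε, c, hε, fun t ht => ?_⟩
  obtain ⟨δ, hδ, h⟩ := hSU ht
  exact h t (by simpa using hδ)

def breakSet (π : Equiv.Perm Circ) : Set Circ := {p | ¬ LocallyAffineAt (π ∘ fractC) p.1}

def piecewiseIsometryGroup : Subgroup (Equiv.Perm Circ) where
  carrier := {π | (breakSet π).Finite}
  one_mem' := by
    refine Set.finite_empty.subset fun p hp => hp ?_
    exact locallyAffineAt_of_forall_eq (ε := 1) (c := 0) abs_one
      (fun x => by rw [one_mul, add_zero, fractC_self]; rfl) p.1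
  mul_mem' {a b} ha hb := by
    refine (hb.union (ha.preimage b.injective.injOn)).subset fun p hp => ?_
    by_contra hcon
    simp only [Set.mem_union, Set.mem_preimage, not_or] at hcon
    have hbp := not_not.1 hcon.1
    have hap := not_not.1 hcon.2
    rw [← fractC_self p] at hap
    exact hp (Equiv.Perm.coe_mul a b ▸ hbp.comp hap)
  inv_mem' {a} ha := by
    refine (ha.image a).subset fun p hp => ⟨a⁻¹ p, fun hq => hp ?_, a.apply_symm_apply p⟩
    have h := hq.perm_inv
    rwa [fractC_self, ← Equiv.Perm.mul_apply, mul_inv_cancel, Equiv.Perm.one_apply] at h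

lemma mem_piecewiseIsometryGroup_of_forall_eq {π : Equiv.Perm Circ} {ε c : ℝ} (hε : |ε| = 1)
    (hπ : ∀ x : Circ, π x = fractC (ε * x.1 + c)) : π ∈ piecewiseIsometryGroup :=
  Set.finite_empty.subset fun p hp => hp (locallyAffineAt_of_forall_eq hε hπ p.1)

lemma eq_of_fract_sub_eq {x y t : Circ} (h : Int.fract (x.1 - t.1) = Int.fract (y.1 - t.1)) :
    x = y := by
  obtain ⟨k, hk⟩ := Int.fract_eq_fract.1 h
  rw [← fractC_self x, ← fractC_self y, fractC_eq_fractC_iff]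
  exact ⟨k, by rw [← hk]; ring⟩

lemma exists_forall_cycR_fractC_iff {t s p : Circ} (hpt : p ≠ t) (hps : p ≠ s) :
    ∃ δ > 0, ∀ u, |u - p.1| < δ → (CycR t.1 (fractC u).1 s.1 ↔ CycR t.1 p.1 s.1) := by
  set a := Int.fract (p.1 - t.1)
  set b := Int.fract (s.1 - t.1)
  have ha0 : 0 < a := (Int.fract_nonneg _).lt_of_ne fun h =>
    hpt (eq_of_fract_sub_eq (t := t) (by rw [sub_self, Int.fract_zero]; exact h.symm))
  have hab : 0 < |b - a| := abs_pos.2 (sub_ne_zero.2 fun h => hps (eq_of_fract_sub_eq h.symm))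
  have ha1 : a < 1 := Int.fract_lt_one _
  refine ⟨min (min a (1 - a)) |b - a|, by positivity, fun u hu => ?_⟩
  have hu1 := hu.trans_le ((min_le_left _ _).trans (min_le_left _ _))
  have hu2 := hu.trans_le ((min_le_left _ _).trans (min_le_right _ _))
  have hu3 := hu.trans_le (min_le_right _ _)
  have hfu : Int.fract ((fractC u).1 - t.1) = a + (u - p.1) := by
    refine Int.fract_eq_iff.2 ⟨by linarith [neg_abs_le (u - p.1)],
      by linarith [le_abs_self (u - p.1)], ⌊p.1 - t.1⌋ - ⌊u⌋, ?_⟩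
    simp only [a, fractC, Int.fract]; push_cast; ring
  rw [cycR_iff_fract, cycR_iff_fract, hfu]
  rw [abs_lt] at hu1 hu3
  constructor <;> intro h' <;> constructor <;> cases abs_cases (b - a) <;> linarith [h'.1, h'.2]

lemma locallyAffineAt_arcRevFun {t s p : Circ} (hpt : p ≠ t) (hps : p ≠ s) :
    LocallyAffineAt (arcRevFun t s ∘ fractC) p.1 := by
  obtain ⟨δ, hδ, hloc⟩ := exists_forall_cycR_fractC_iff hpt hps
  by_cases hp : CycR t.1 p.1 s.1
  · refine ⟨δ, hδ, -1, t.1 + s.1, by simp, fun u hu => ?_⟩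
    rw [Function.comp_apply, arcRevFun, if_pos ((hloc u hu).2 hp), fractC_eq_fractC_iff]
    exact ⟨⌊u⌋, by simp only [fractC, Int.fract]; ring⟩
  · refine ⟨δ, hδ, 1, 0, abs_one, fun u hu => ?_⟩
    rw [Function.comp_apply, arcRevFun, if_neg (mt (hloc u hu).1 hp), one_mul, add_zero]

lemma dihInf_le_piecewiseIsometryGroup : DihInf ≤ piecewiseIsometryGroup := by
  rw [DihInf, Subgroup.closure_le]
  rintro π (⟨u, -, hπ⟩ | hπ)
  · exact mem_piecewiseIsometryGroup_of_forall_eq (ε := 1) (c := u) abs_one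
      fun x => by rw [hπ, one_mul]; rfl
  · exact mem_piecewiseIsometryGroup_of_forall_eq (ε := -1) (c := 0) (by simp)
      fun x => by rw [hπ, neg_one_mul, add_zero]; rfl

lemma gInf_le_piecewiseIsometryGroup : GInf ≤ piecewiseIsometryGroup := by
  rw [GInf, Subgroup.closure_le]
  rintro π ⟨t, s, -, hπ⟩
  refine (Set.toFinite {t, s}).subset fun p hp => ?_
  by_contra hcon
  simp only [Set.mem_insert_iff, Set.mem_singleton_iff, not_or] at hcon
  exact hp (hπ ▸ locallyAffineAt_arcRevFun hcon.1 hcon.2)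

lemma lt_of_forall_ne_image_window {d : Circ → Circ → ℝ} {π : Equiv.Perm Circ}
    (hRob : StrictCircRobinsonC fun x y => d (π x) (π y)) (p : Circ) {h : ℝ} (hh : 0 < h)
    {V : Circ} (hV : ∀ t, |t - p.1| ≤ h → π (fractC t) ≠ V) :
    min (d (π p) (π (fractC (p.1 - h)))) (d (π p) (π (fractC (p.1 + h)))) < d (π p) V := by
  obtain ⟨t, ht₁, ht₂, ht⟩ := exists_fractC_eq (π⁻¹ V) (p.1 + h - 1)
  have hπt : π (fractC t) = V := by rw [ht]; exact π.apply_symm_apply V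
  have hlo : p.1 + h - 1 < t := by
    refine ht₁.lt_of_ne fun heq => hV (t + 1) (by rw [← heq, abs_le]; constructor <;> linarith) ?_
    rw [← hπt, fractC_eq_fractC_iff.2 ⟨1, by push_cast; ring⟩]
  have hhi : t < p.1 - h := by
    by_contra! hge
    exact hV t (by rw [abs_le]; constructor <;> linarith) hπt
  have h₁ := cycR_fractC (a := t) (b := p.1 - h) (c := p.1) hhi (by linarith) (by linarith)
  have h₂ := cycR_fractC (a := t) (b := p.1) (c := p.1 + h) (by linarith) (by linarith)
    (by linarith)
  rw [fractC_self] at h₁ h₂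
  simpa only [hπt] using hRob.lt_of_cycR h₁ h₂

lemma exists_ball_subset_image_window {d : Circ → Circ → ℝ} (hd : DissimC d)
    (hc : ContinuousArcC d) (hR : StrictCircRobinsonC d) {π : Equiv.Perm Circ}
    (hRob : StrictCircRobinsonC fun x y => d (π x) (π y)) (p : Circ) {h : ℝ} (hh : 0 < h) :
    ∃ ρ > 0, ∀ y, |y - (π p).1| < ρ → ∃ t, |t - p.1| ≤ h ∧ π (fractC t) = fractC y := by
  set h' := min h (1 / 2)
  have hh' : 0 < h' := by positivity
  have hh'2 : h' ≤ 1 / 2 := min_le_right _ _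
  have hne : ∀ e, e ≠ 0 → |e| ≤ h' → π p ≠ π (fractC (p.1 + e)) := fun e he₀ he =>
    π.injective.ne <| by
      conv_lhs => rw [← fractC_self p]
      exact fractC_ne_of_abs_lt (by simpa using he₀)
        (by rw [sub_add_cancel_left, abs_neg]; linarith)
  have hm : 0 < min (d (π p) (π (fractC (p.1 - h')))) (d (π p) (π (fractC (p.1 + h')))) := by
    refine lt_min (hd.pos_of_strictCircRobinsonC hR ?_) (hd.pos_of_strictCircRobinsonC hR ?_)
    · rw [sub_eq_add_neg]
      exact hne _ (neg_ne_zero.2 hh'.ne') (by rw [abs_neg, abs_of_pos hh'])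
    · exact hne _ hh'.ne' (abs_of_pos hh').le
  obtain ⟨ρ, hρ, hcont⟩ := hc (π p) (π p) _ hm
  refine ⟨ρ, hρ, fun y hy => ?_⟩
  by_contra! hno
  have hlt := lt_of_forall_ne_image_window hRob p hh' (V := fractC y)
    fun t ht => hno t (ht.trans (min_le_left _ _))
  have hclose := hcont (π p) (fractC y) (by simpa [ArcDist] using hρ)
    ((arcDist_fractC_le _ _).trans_lt (by rwa [abs_sub_comm]))
  rw [hd.2] at hclose
  linarith [(abs_lt.1 hclose).2]

lemma sub_eq_coe_of_add_coe_eq {P a : UnitAddCircle} {u v : ℝ} (h : P + u = a + v) :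
    P - a = ((v - u : ℝ) : UnitAddCircle) := by
  rw [AddCircle.coe_sub, sub_eq_sub_iff_add_eq_add, h, add_comm]

lemma abs_mul_of_abs_eq_one {α s : ℝ} (hα : |α| = 1) (hs : 0 ≤ s) : |α * s| = s := by
  rw [abs_mul, hα, one_mul, abs_of_nonneg hs]

lemma coe_mul_add_mul_ne_zero {α r s : ℝ} (hα : |α| = 1) (hr : 0 < r) (hs : 0 < s)
    (hrs : r + s < 1) : ((α * s + α * r : ℝ) : UnitAddCircle) ≠ 0 := by
  have habs : |α * s + α * r| = s + r := by
    rw [← mul_add, abs_mul, hα, one_mul, abs_of_pos (by linarith)]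
  exact coe_ne_zero_of_abs_lt (fun h => by simp [h] at habs; linarith) (by linarith)

-- Meant for `P = π p`, with `a + α s` and `b + β s` the images of the points at distance `s` to the
-- left and to the right of `p`: on each side of `P`, arbitrarily close to `P`, lies such an image.
def ArcsCoverNear (P a : UnitAddCircle) (α : ℝ) (b : UnitAddCircle) (β : ℝ) : Prop :=
  ∀ h > 0, ∀ σ : ℝ, |σ| = 1 → ∃ r s : ℝ, 0 < r ∧ r < h ∧ 0 < s ∧ s ≤ h ∧
    (P + (σ * r : ℝ) = a + (α * s : ℝ) ∨ P + (σ * r : ℝ) = b + (β * s : ℝ))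

lemma ArcsCoverNear.symm {P a b : UnitAddCircle} {α β : ℝ} (h : ArcsCoverNear P a α b β) :
    ArcsCoverNear P b β a α := fun h' hh' σ hσ => by
  obtain ⟨r, s, hr, hrh, hs, hsh, hcase⟩ := h h' hh' σ hσ
  exact ⟨r, s, hr, hrh, hs, hsh, hcase.symm⟩

lemma ArcsCoverNear.eq_and_eq_neg_of_eq {P a b : UnitAddCircle} {α β : ℝ}
    (hcov : ArcsCoverNear P a α b β) (hα : |α| = 1) (hβ : |β| = 1) (hPa : P = a) :
    a = b ∧ α = -β := by
  subst hPa
  -- The points on the `-α` side of `P = a` are not on the arc `a + α s`, so they are on the other.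
  have hright : ∀ h > 0, h ≤ 1 / 2 → ∃ r s : ℝ, 0 < r ∧ r < h ∧ 0 < s ∧ s ≤ h ∧
      P - b = ((β * s + α * r : ℝ) : UnitAddCircle) := by
    intro h hh hh2
    obtain ⟨r, s, hr, hrh, hs, hsh, hcase | hcase⟩ := hcov h hh (-α) (by rwa [abs_neg])
    · refine absurd ?_ (coe_mul_add_mul_ne_zero hα hr hs (by linarith))
      have := sub_eq_coe_of_add_coe_eq hcase
      rw [sub_self] at this
      rw [this]; ring_nf
    · refine ⟨r, s, hr, hrh, hs, hsh, ?_⟩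
      rw [sub_eq_coe_of_add_coe_eq hcase]; ring_nf
  have hPb : P = b := by
    refine sub_eq_zero.1 (norm_le_zero_iff.1 (le_of_forall_pos_lt_add fun η hη => ?_))
    obtain ⟨r, s, hr, hrh, hs, hsh, heq⟩ := hright (min (η / 2) (1 / 2)) (by positivity)
      (min_le_right _ _)
    rw [heq]
    linarith [norm_coe_le_abs (β * s + α * r), abs_add_le (β * s) (α * r),
      abs_mul_of_abs_eq_one hα hr.le, abs_mul_of_abs_eq_one hβ hs.le, min_le_left (η / 2) (1 / 2)]
  refine ⟨hPb, ?_⟩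
  obtain ⟨r, s, hr, hrh, hs, hsh, heq⟩ := hright (1 / 2) (by norm_num) le_rfl
  rw [hPb, sub_self] at heq
  rcases (abs_eq zero_le_one).1 hα with rfl | rfl <;>
    rcases (abs_eq zero_le_one).1 hβ with rfl | rfl
  · exact absurd heq.symm (coe_mul_add_mul_ne_zero abs_one hr hs (by linarith))
  · norm_num
  · norm_num
  · exact absurd heq.symm (coe_mul_add_mul_ne_zero (by norm_num) hr hs (by linarith))

lemma ArcsCoverNear.eq_and_eq_neg {P a b : UnitAddCircle} {α β : ℝ}
    (hcov : ArcsCoverNear P a α b β) (hα : |α| = 1) (hβ : |β| = 1) :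
    P = a ∧ a = b ∧ α = -β := by
  have hPab : P = a ∨ P = b := by
    by_contra! hne
    obtain ⟨ha, hb⟩ := And.intro (norm_pos_iff.2 (sub_ne_zero.2 hne.1))
      (norm_pos_iff.2 (sub_ne_zero.2 hne.2))
    obtain ⟨r, s, hr, hrh, hs, hsh, hcase⟩ :=
      hcov (min ‖P - a‖ ‖P - b‖ / 2) (by positivity) 1 abs_one
    have hclose : ∀ (c : UnitAddCircle) (γ : ℝ), |γ| = 1 → P + ((1 * r : ℝ) : UnitAddCircle) =
        c + ((γ * s : ℝ) : UnitAddCircle) → ‖P - c‖ < min ‖P - a‖ ‖P - b‖ := by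
      intro c γ hγ hc
      rw [sub_eq_coe_of_add_coe_eq hc]
      linarith [norm_coe_le_abs (γ * s - 1 * r), abs_sub (γ * s) (1 * r),
        abs_mul_of_abs_eq_one hγ hs.le, abs_mul_of_abs_eq_one abs_one hr.le]
    rcases hcase with hcase | hcase
    · linarith [hclose a α hα hcase, min_le_left ‖P - a‖ ‖P - b‖]
    · linarith [hclose b β hβ hcase, min_le_right ‖P - a‖ ‖P - b‖]
  rcases hPab with hPa | hPb
  · exact ⟨hPa, hcov.eq_and_eq_neg_of_eq hα hβ hPa⟩
  · obtain ⟨hba, hβα⟩ := hcov.symm.eq_and_eq_neg_of_eq hβ hα hPb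
    exact ⟨hPb.trans hba, hba.symm, by rw [hβα, neg_neg]⟩

lemma arcsCoverNear_of_sides {Φ : ℝ → Circ} {p δ ε₁ c₁ ε₂ c₂ : ℝ} (hδ : 0 < δ)
    (hleft : ∀ t ∈ Ioo (p - δ) p, Φ t = fractC (ε₁ * t + c₁))
    (hright : ∀ t ∈ Ioo p (p + δ), Φ t = fractC (ε₂ * t + c₂))
    (hopen : ∀ h > 0, ∃ ρ > 0, ∀ y, |y - (Φ p).1| < ρ → ∃ t, |t - p| ≤ h ∧ Φ t = fractC y) :
    ArcsCoverNear (Φ p).1 (ε₁ * p + c₁ : ℝ) (-ε₁) (ε₂ * p + c₂ : ℝ) ε₂ := by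
  set P := (Φ p).1
  intro h hh σ hσ
  set h' := min h (δ / 2)
  have hh'h : h' ≤ h := min_le_left _ _
  have hh'δ : h' < δ := by linarith [min_le_right h (δ / 2)]
  have hh' : 0 < h' := by positivity
  obtain ⟨ρ, hρ, hρΦ⟩ := hopen h' hh'
  obtain ⟨r, hr, hrρ, hrh', hr1⟩ : ∃ r, 0 < r ∧ r < ρ ∧ r < h' ∧ r < 1 :=
    ⟨min ρ (min h' 1) / 2, by positivity, by linarith [min_le_left ρ (min h' 1)],
      by linarith [min_le_right ρ (min h' 1), min_le_left h' 1],
      by linarith [min_le_right ρ (min h' 1), min_le_right h' 1]⟩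
  have hσr := abs_mul_of_abs_eq_one hσ hr.le
  obtain ⟨t, ht, hΦt⟩ := hρΦ (P + σ * r) (by rwa [add_sub_cancel_left, hσr])
  rw [abs_le] at ht
  have hΦt' : (P : UnitAddCircle) + (σ * r : ℝ) = (Φ t).1 := by
    rw [hΦt, coe_fractC, AddCircle.coe_add]
  have htp : t ≠ p := by
    rintro rfl
    refine fractC_ne_of_abs_lt (a := P) (b := P + σ * r) ?_
      (by rwa [sub_add_cancel_left, abs_neg, hσr]) (by rw [fractC_self, ← hΦt])
    intro h0
    rcases mul_eq_zero.1 (by linarith : σ * r = 0) with h0 | h0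
    · simp [h0] at hσ
    · exact hr.ne' h0
  rcases lt_or_gt_of_ne htp with htp | htp
  · refine ⟨r, p - t, hr, hrh'.trans_le hh'h, sub_pos.2 htp, by linarith, Or.inl ?_⟩
    rw [hΦt', hleft t ⟨by linarith, htp⟩, coe_fractC, ← AddCircle.coe_add]
    ring_nf
  · refine ⟨r, t - p, hr, hrh'.trans_le hh'h, sub_pos.2 htp, by linarith, Or.inr ?_⟩
    rw [hΦt', hright t ⟨htp, by linarith⟩, coe_fractC, ← AddCircle.coe_add]
    ring_nf

lemma locallyAffineAt_of_sides {Φ : ℝ → Circ} {p δ ε₁ c₁ ε₂ c₂ : ℝ} (hδ : 0 < δ)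
    (hε₁ : |ε₁| = 1) (hε₂ : |ε₂| = 1)
    (hleft : ∀ t ∈ Ioo (p - δ) p, Φ t = fractC (ε₁ * t + c₁))
    (hright : ∀ t ∈ Ioo p (p + δ), Φ t = fractC (ε₂ * t + c₂))
    (hopen : ∀ h > 0, ∃ ρ > 0, ∀ y, |y - (Φ p).1| < ρ → ∃ t, |t - p| ≤ h ∧ Φ t = fractC y) :
    LocallyAffineAt Φ p := by
  obtain ⟨hPa, hab, hε⟩ :=
    (arcsCoverNear_of_sides hδ hleft hright hopen).eq_and_eq_neg (by rwa [abs_neg]) hε₂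
  rw [neg_inj] at hε
  refine ⟨δ, hδ, ε₁, c₁, hε₁, fun u hu => ?_⟩
  rw [abs_lt] at hu
  rcases lt_trichotomy u p with hup | rfl | hup
  · exact hleft u ⟨by linarith, hup⟩
  · rwa [← fractC_self (Φ u), fractC_eq_fractC_iff_coe]
  · rw [hright u ⟨hup, by linarith⟩, fractC_eq_fractC_iff_coe]
    calc ((ε₂ * u + c₂ : ℝ) : UnitAddCircle)
        = ((ε₂ * p + c₂ : ℝ) : UnitAddCircle) + (ε₂ * (u - p) : ℝ) := by
          rw [← AddCircle.coe_add]; ring_nf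
      _ = ((ε₁ * p + c₁ : ℝ) : UnitAddCircle) + (ε₁ * (u - p) : ℝ) := by rw [← hab, hε]
      _ = ((ε₁ * u + c₁ : ℝ) : UnitAddCircle) := by rw [← AddCircle.coe_add]; ring_nf

lemma exists_punctured_ball_locallyAffineAt {π : Equiv.Perm Circ} (hfin : (breakSet π).Finite)
    (p : ℝ) : ∃ δ > 0, ∀ u, u ≠ p → |u - p| < δ → LocallyAffineAt (π ∘ fractC) u := by
  set B := {u ∈ Ioo (p - 1 / 2) (p + 1 / 2) | u ≠ p ∧ ¬ LocallyAffineAt (π ∘ fractC) u}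
  have hB : B.Finite := by
    refine Set.Finite.of_finite_image (f := fractC) (hfin.subset ?_) fun u hu v hv huv => ?_
    · rintro _ ⟨u, ⟨-, -, hu⟩, rfl⟩ h
      exact hu (h.of_fractC_eq (fractC_self _))
    · refine eq_of_fractC_eq huv ?_
      obtain ⟨⟨hu₁, hu₂⟩, -⟩ := hu
      obtain ⟨⟨hv₁, hv₂⟩, -⟩ := hv
      rw [abs_lt]; constructor <;> linarith
  obtain ⟨ε, hε, hball⟩ := Metric.isOpen_iff.1 hB.isClosed.isOpen_compl p fun hp => hp.2.1 rfl
  refine ⟨min ε (1 / 2), by positivity, fun u hup hu => ?_⟩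
  by_contra hbad
  have hu₁ := hu.trans_le (min_le_left _ _)
  have hu₂ := abs_lt.1 (hu.trans_le (min_le_right _ _))
  exact hball (by rwa [Metric.mem_ball, Real.dist_eq]) ⟨⟨by linarith, by linarith⟩, hup, hbad⟩

lemma locallyAffineAt_of_strictCircRobinsonC {d : Circ → Circ → ℝ} (hd : DissimC d)
    (hc : ContinuousArcC d) (hR : StrictCircRobinsonC d) {π : Equiv.Perm Circ}
    (hRob : StrictCircRobinsonC fun x y => d (π x) (π y)) (hfin : (breakSet π).Finite)
    (p : Circ) : LocallyAffineAt (π ∘ fractC) p.1 := by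
  obtain ⟨δ, hδ, hwin⟩ := exists_punctured_ball_locallyAffineAt hfin p.1
  obtain ⟨ε₁, c₁, hε₁, hleft⟩ := exists_affine_of_isPreconnected (S := Ioo (p.1 - δ) p.1)
    isPreconnected_Ioo fun t ht =>
      hwin t ht.2.ne (by rw [abs_lt]; constructor <;> linarith [ht.1, ht.2])
  obtain ⟨ε₂, c₂, hε₂, hright⟩ := exists_affine_of_isPreconnected (S := Ioo p.1 (p.1 + δ))
    isPreconnected_Ioo fun t ht =>
      hwin t ht.1.ne' (by rw [abs_lt]; constructor <;> linarith [ht.1, ht.2])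
  refine locallyAffineAt_of_sides hδ hε₁ hε₂ hleft hright fun h hh => ?_
  simpa only [Function.comp_apply, fractC_self] using
    exists_ball_subset_image_window hd hc hR hRob p hh

lemma mem_dihInf_of_forall_eq_add {π : Equiv.Perm Circ} {c : ℝ}
    (hπ : ∀ x : Circ, π x = fractC (x.1 + c)) : π ∈ DihInf := by
  refine Subgroup.subset_closure
    (Or.inl ⟨Int.fract c, ⟨Int.fract_nonneg c, Int.fract_lt_one c⟩, ?_⟩)
  funext x
  rw [hπ, shiftFun, fractC_eq_fractC_iff]
  exact ⟨⌊c⌋, by rw [Int.fract]; ring⟩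

lemma revFun_involutive : Function.Involutive revFun := fun x => by
  refine (fractC_eq_fractC_iff.2 ⟨⌊-x.1⌋, ?_⟩).trans (fractC_self x)
  simp only [revFun, fractC, Int.fract]; ring

lemma mem_dihInf_of_forall_eq {π : Equiv.Perm Circ} {ε c : ℝ} (hε : |ε| = 1)
    (hπ : ∀ x : Circ, π x = fractC (ε * x.1 + c)) : π ∈ DihInf := by
  rcases (abs_eq zero_le_one).1 hε with rfl | rfl
  · exact mem_dihInf_of_forall_eq_add fun x => by rw [hπ, one_mul]
  set ρ := revFun_involutive.toPerm
  have hρ : ρ ∈ DihInf := Subgroup.subset_closure (Or.inr rfl)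
  have hπρ : π * ρ ∈ DihInf := mem_dihInf_of_forall_eq_add (c := c) fun x => by
    rw [Equiv.Perm.mul_apply, hπ, fractC_eq_fractC_iff]
    refine ⟨⌊-x.1⌋, ?_⟩
    simp only [ρ, Function.Involutive.coe_toPerm, revFun, fractC, Int.fract]
    ring
  have hρρ : ρ * ρ = 1 := Equiv.ext revFun_involutive
  simpa only [mul_assoc, hρρ, mul_one] using DihInf.mul_mem hπρ hρ

/-- If `π = g ∘ h` with `g` in the infinite dihedral group and `h` in the group
generated by arc reversals, and `d ∘ π` is strict circular Robinson for a
continuous strict circular Robinson dissimilarity `d`, then `π` is in the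
infinite dihedral group. -/
theorem statement17 (d : Circ → Circ → ℝ) (hd : DissimC d)
    (hc : ContinuousArcC d) (hR : StrictCircRobinsonC d)
    (π g h : Equiv.Perm Circ) (hg : g ∈ DihInf) (hh : h ∈ GInf) (hπ : π = g * h)
    (hRob : StrictCircRobinsonC fun x y => d (π x) (π y)) :
    π ∈ DihInf := by
  have hfin : (breakSet π).Finite := hπ ▸ piecewiseIsometryGroup.mul_mem
    (dihInf_le_piecewiseIsometryGroup hg) (gInf_le_piecewiseIsometryGroup hh)
  have hloc (t : ℝ) : LocallyAffineAt (π ∘ fractC) t :=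
    (locallyAffineAt_of_strictCircRobinsonC hd hc hR hRob hfin (fractC t)).of_fractC_eq
      (fractC_self _)
  obtain ⟨ε, c, hε, hπc⟩ := exists_affine_of_isPreconnected isPreconnected_univ fun t _ => hloc t
  exact mem_dihInf_of_forall_eq hε fun x => by
    simpa only [Function.comp_apply, fractC_self] using hπc x.1 trivial
end

section
/- Let d be a dissimilarity on [0,1) satisfying the bi-Lipschitz property ℓ·Arc(s,t) ≤ d(s,t) ≤ L·Arc(s,t) for all s,t ∈ [0,1), where 0 < ℓ ≤ L. Let δ > 0 and 0 ≤ ε < ℓδ/(L+ℓ). Suppose s, s⁺, t, t⁺ ∈ [0,1) satisfy Arc(s, s⁺) ≤ ε, Arc(t, t⁺) ≤ ε, and Arc(s, t) > δ. Then d(s, s⁺) < min{d(s, t), d(s, t⁺)}. -/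
open Set

lemma arc_tri_aux (x y : ℝ) (hx : |x| < 1) (hy : |y| < 1) (hxy : |x + y| < 1) :
    min |x + y| (1 - |x + y|) ≤ min |x| (1 - |x|) + min |y| (1 - |y|) := by
  obtain ⟨hx3, hx4⟩ := abs_lt.mp hx
  obtain ⟨hy3, hy4⟩ := abs_lt.mp hy
  obtain ⟨hxy3, hxy4⟩ := abs_lt.mp hxy
  rcases abs_cases x with ⟨hx1, hx2⟩ | ⟨hx1, hx2⟩ <;>
  rcases abs_cases y with ⟨hy1, hy2⟩ | ⟨hy1, hy2⟩ <;>
  rcases abs_cases (x + y) with ⟨h1, h2⟩ | ⟨h1, h2⟩ <;>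
  rw [hx1, hy1, h1] <;>
  simp only [min_def] <;> split_ifs <;> linarith

lemma arc_tri (a b c : ℝ) (ha : a ∈ Ico (0:ℝ) 1) (hb : b ∈ Ico (0:ℝ) 1)
    (hc : c ∈ Ico (0:ℝ) 1) : ArcDist a c ≤ ArcDist a b + ArcDist b c := by
  obtain ⟨ha0, ha1⟩ := ha
  obtain ⟨hb0, hb1⟩ := hb
  obtain ⟨hc0, hc1⟩ := hc
  have h1 : |a - b| < 1 := by rw [abs_sub_lt_iff]; constructor <;> linarith
  have h2 : |b - c| < 1 := by rw [abs_sub_lt_iff]; constructor <;> linarith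
  have h3 : |(a - b) + (b - c)| < 1 := by
    rw [show (a - b) + (b - c) = a - c by ring, abs_sub_lt_iff]
    constructor <;> linarith
  have := arc_tri_aux (a - b) (b - c) h1 h2 h3
  simpa [ArcDist, show (a - b) + (b - c) = a - c by ring] using this

lemma arc_symm (a b : ℝ) : ArcDist a b = ArcDist b a := by
  simp [ArcDist, abs_sub_comm]

theorem statement18 (d : ℝ → ℝ → ℝ) (ℓ L : ℝ) (hℓ : 0 < ℓ) (hℓL : ℓ ≤ L)
    (hd : DissimOn d)
    (hbl : ∀ s ∈ Ico (0:ℝ) 1, ∀ t ∈ Ico (0:ℝ) 1,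
      ℓ * ArcDist s t ≤ d s t ∧ d s t ≤ L * ArcDist s t)
    (δ ε : ℝ) (hδ : 0 < δ) (hε0 : 0 ≤ ε) (hε : ε < ℓ * δ / (L + ℓ))
    (s s' t t' : ℝ)
    (hs : s ∈ Ico (0:ℝ) 1) (hs' : s' ∈ Ico (0:ℝ) 1)
    (ht : t ∈ Ico (0:ℝ) 1) (ht' : t' ∈ Ico (0:ℝ) 1)
    (h1 : ArcDist s s' ≤ ε) (h2 : ArcDist t t' ≤ ε) (h3 : δ < ArcDist s t) :
    d s s' < min (d s t) (d s t') := by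
  have hLℓ : 0 < L + ℓ := by linarith
  have hεkey : ε * (L + ℓ) < ℓ * δ := by
    rwa [← lt_div_iff₀ hLℓ]
  -- d s s' ≤ L * ε
  have hdss' : d s s' ≤ L * ε := by
    have := (hbl s hs s' hs').2
    have hL0 : 0 ≤ L := by linarith
    nlinarith
  -- d s t > ℓ * δ
  have hdst : ℓ * δ < d s t := by
    have := (hbl s hs t ht).1
    nlinarith
  -- Arc(s,t') > δ - ε
  have htri : ArcDist s t ≤ ArcDist s t' + ArcDist t' t := arc_tri s t' t hs ht' ht
  have hst' : δ - ε < ArcDist s t' := by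
    rw [arc_symm t' t] at htri
    linarith
  have hdst' : ℓ * (δ - ε) < d s t' := by
    have := (hbl s hs t' ht').1
    nlinarith
  have hmain : L * ε < ℓ * (δ - ε) := by nlinarith
  have : L * ε < ℓ * δ := by nlinarith
  exact lt_min (by linarith) (by linarith)
end
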